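/- arXiv:1510.00782 — 4 statements merged into one kernel-verified Lean document; each statement's English description precedes it below -/
import Mathlib

section
/- For every integer n ≥ 1 and every 0 < φ < π/2, the normalized measure of a spherical cap of angular radius φ on the sphere S^n satisfies Ω_n(φ) > sin^n(φ) / √(2π(n+1)). -/
/-!
The cap measure is the volume of the sector `{x | 0 < ‖x‖ < 1, ∠(x, e₀) ≤ φ}` divided by the
volume `κₙ₊₁` of the unit ball of `ℝⁿ⁺¹`. The sector contains the double cone with apices `0` and
`e₀` over the `n`-disc of radius `sin φ` at height `cos φ`; as the heights of its two halves add up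
to `1`, its volume is `κₙ sinⁿ φ / (n + 1)`. Finally
`κₙ / ((n + 1) κₙ₊₁) = Γ(n/2 + 3/2) / ((n + 1) √π Γ(n/2 + 1))`, and Gautschi's inequality
`Γ(y + 1/2) / Γ(y) > √(y - 1/2)`, a consequence of the log-convexity of `Γ`, bounds this from
below by `1 / √(2π(n + 1))`.
-/

open Set Metric MeasureTheory ProbabilityTheory InnerProductGeometry Real


noncomputable section

/-- `ℝ^n` as a Euclidean space. -/
abbrev Euc (n : ℕ) : Type := EuclideanSpace ℝ (Fin n)

/-- A direction `u` illuminates the body `K` at the boundary point `b` if the ray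
`{b + λ • u : λ > 0}` meets the interior of `K`. -/
def Illuminates {n : ℕ} (K : Set (Euc n)) (u b : Euc n) : Prop :=
  ∃ lam : ℝ, 0 < lam ∧ b + lam • u ∈ interior K

/-- A set `A` of directions illuminates `K` if every boundary point of `K` is illuminated
by some direction in `A`. -/
def IlluminatedBy {n : ℕ} (K A : Set (Euc n)) : Prop :=
  ∀ b ∈ frontier K, ∃ u ∈ A, Illuminates K u b

/-- The illumination number of `K`: the minimum number of directions (unit vectors)
that together illuminate every boundary point of `K`. -/
def illumNumber {n : ℕ} (K : Set (Euc n)) : ℕ :=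
  sInf {m | ∃ A : Finset (Euc n), (A : Set (Euc n)) ⊆ Metric.sphere (0 : Euc n) 1 ∧
    IlluminatedBy K (A : Set (Euc n)) ∧ A.card = m}

/-- The normalized (Haar, i.e. rotation-invariant probability) measure on the unit
sphere `S^n ⊆ ℝ^{n+1}`. -/
def sphereHaar (n : ℕ) : Measure ↥(Metric.sphere (0 : Euc (n+1)) 1) :=
  ((volume : Measure (Euc (n+1))).toSphere Set.univ)⁻¹ • (volume : Measure (Euc (n+1))).toSphere

/-- `Ω_n φ`: the normalized Haar measure of a spherical cap of angular radius `φ` on `S^n`. -/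
def Omega (n : ℕ) (φ : ℝ) : ℝ :=
  (sphereHaar n {v | InnerProductGeometry.angle (v : Euc (n+1))
      (EuclideanSpace.single 0 1) ≤ φ}).toReal


open scoped Pointwise

theorem Real.sqrt_sub_half_lt_Gamma_add_half_div_Gamma {y : ℝ} (hy : 0 < y) :
    √(y - 1 / 2) < Gamma (y + 1 / 2) / Gamma y := by
  have hΓ : 0 < Gamma (y + 1 / 2) := Gamma_pos_of_pos (by linarith)
  -- log-convexity of `Γ` at the midpoint `y + 1` of `y + 1/2` and `y + 3/2`
  have hconv : y * Gamma y ≤ Gamma (y + 1 / 2) * √(y + 1 / 2) := by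
    have h := Gamma_mul_add_mul_le_rpow_Gamma_mul_rpow_Gamma (s := y + 1 / 2) (t := y + 3 / 2)
      (a := 1 / 2) (b := 1 / 2) (by linarith) (by linarith) (by norm_num) (by norm_num)
      (by norm_num)
    rw [show 1 / 2 * (y + 1 / 2) + 1 / 2 * (y + 3 / 2) = y + 1 by ring, Gamma_add_one hy.ne',
      show y + 3 / 2 = y + 1 / 2 + 1 by ring, Gamma_add_one (by linarith),
      mul_rpow (by linarith) hΓ.le, ← sqrt_eq_rpow, ← sqrt_eq_rpow] at h
    calc y * Gamma y ≤ √(Gamma (y + 1 / 2)) * (√(y + 1 / 2) * √(Gamma (y + 1 / 2))) := h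
      _ = Gamma (y + 1 / 2) * √(y + 1 / 2) := by
        rw [mul_left_comm, mul_self_sqrt hΓ.le, mul_comm]
  have hroot : 0 < √(y + 1 / 2) := sqrt_pos.2 (by linarith)
  calc √(y - 1 / 2) < y / √(y + 1 / 2) := by
        rw [sqrt_lt' (by positivity), div_pow, sq_sqrt (by linarith), lt_div_iff₀ (by linarith)]
        nlinarith
    _ ≤ Gamma (y + 1 / 2) / Gamma y := by
        rwa [div_le_div_iff₀ hroot (Gamma_pos_of_pos hy)]

theorem EuclideanSpace.volume_ball_zero_one (m : ℕ) :
    volume (ball (0 : Euc m) 1) = ENNReal.ofReal (√π ^ m / Gamma (m / 2 + 1)) := by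
  cases m with
  | zero => simp [volume_euclideanSpace_eq_dirac]
  | succ m => simpa using EuclideanSpace.volume_ball (Fin (m + 1)) 0 1

theorem one_div_sqrt_lt_volume_ball_div (n : ℕ) :
    1 / √(2 * π * (n + 1)) < (volume (ball (0 : Euc n) 1)).toReal /
      ((n + 1) * (volume (ball (0 : Euc (n + 1)) 1)).toReal) := by
  have hy : (0 : ℝ) < n / 2 + 1 := by positivity
  have hgautschi := sqrt_sub_half_lt_Gamma_add_half_div_Gamma hy
  rw [show (n : ℝ) / 2 + 1 - 1 / 2 = (n + 1) / 2 by ring] at hgautschi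
  rw [EuclideanSpace.volume_ball_zero_one, EuclideanSpace.volume_ball_zero_one,
    ENNReal.toReal_ofReal (by positivity), ENNReal.toReal_ofReal (by positivity),
    Nat.cast_succ, show ((n : ℝ) + 1) / 2 + 1 = n / 2 + 1 + 1 / 2 by ring, pow_succ]
  calc 1 / √(2 * π * (n + 1)) = √((n + 1) / 2) / ((n + 1) * √π) := by
        rw [div_eq_div_iff (by positivity) (by positivity), one_mul, ← sqrt_mul (by positivity),
          show (n + 1) / 2 * (2 * π * (n + 1)) = (n + 1) ^ 2 * π by ring,
          sqrt_mul (by positivity), sqrt_sq (by positivity)]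
    _ < Gamma (n / 2 + 1 + 1 / 2) / Gamma (n / 2 + 1) / ((n + 1) * √π) := by gcongr
    _ = _ := by field_simp

theorem InnerProductGeometry.angle_le_of_cos_mul_le_inner {E : Type*} [NormedAddCommGroup E]
    [InnerProductSpace ℝ E] {x u : E} {φ : ℝ} (hφ0 : 0 ≤ φ) (hφπ : φ ≤ π)
    (hx : x ≠ 0) (hu : u ≠ 0) (h : cos φ * (‖x‖ * ‖u‖) ≤ inner ℝ x u) : angle x u ≤ φ := by
  rw [angle, ← arccos_cos hφ0 hφπ]
  exact arccos_le_arccos ((le_div_iff₀ (by positivity)).2 h)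

theorem measurableSet_setOf_angle_le {E : Type*} [NormedAddCommGroup E] [InnerProductSpace ℝ E]
    [MeasurableSpace E] [BorelSpace E] (u : E) (φ : ℝ) :
    MeasurableSet {v : sphere (0 : E) 1 | angle (v : E) u ≤ φ} := by
  refine measurableSet_le ?_ measurable_const
  unfold angle
  fun_prop

theorem Ioo_smul_coe_image_setOf_angle_le {E : Type*} [NormedAddCommGroup E]
    [InnerProductSpace ℝ E] (u : E) (φ : ℝ) :
    Ioo (0 : ℝ) 1 • (Subtype.val '' {v : sphere (0 : E) 1 | angle (v : E) u ≤ φ}) =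
      {x | ‖x‖ ∈ Ioo 0 1 ∧ angle x u ≤ φ} := by
  ext x
  constructor
  · rintro ⟨r, hr, _, ⟨v, hv, rfl⟩, rfl⟩
    have hnorm : ‖r • (v : E)‖ = r := by simp [norm_smul, abs_of_pos hr.1]
    show ‖r • (v : E)‖ ∈ Ioo 0 1 ∧ angle (r • (v : E)) u ≤ φ
    exact ⟨by rw [hnorm]; exact hr, (angle_smul_left_of_pos _ _ hr.1).trans_le hv⟩
  · rintro ⟨hx, hangle⟩
    have hx0 : x ≠ 0 := norm_pos_iff.1 hx.1
    refine ⟨‖x‖, hx, ‖x‖⁻¹ • x, ⟨⟨‖x‖⁻¹ • x, ?_⟩, ?_, rfl⟩,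
      smul_inv_smul₀ (norm_ne_zero_iff.2 hx0) x⟩
    · simp [norm_smul, hx0]
    · simpa [angle_smul_left_of_pos _ _ (inv_pos.2 hx.1)] using hangle

theorem sphereHaar_toReal_apply (n : ℕ) {s : Set (sphere (0 : Euc (n + 1)) 1)}
    (hs : MeasurableSet s) :
    (sphereHaar n s).toReal = (volume (Ioo (0 : ℝ) 1 • (Subtype.val '' s))).toReal /
      (volume (ball (0 : Euc (n + 1)) 1)).toReal := by
  rw [sphereHaar, Measure.smul_apply, smul_eq_mul, Measure.toSphere_apply' _ hs,
    Measure.toSphere_apply_univ, ENNReal.toReal_mul, ENNReal.toReal_inv, ENNReal.toReal_mul,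
    ENNReal.toReal_mul, finrank_euclideanSpace_fin, ENNReal.toReal_natCast]
  field_simp

def headTail (n : ℕ) (x : Euc (n + 1)) : ℝ × Euc n :=
  (x 0, WithLp.toLp 2 fun j => x j.succ)

theorem measurePreserving_headTail (n : ℕ) : MeasurePreserving (headTail n) := by
  have h := ((MeasurePreserving.id volume).prod (PiLp.volume_preserving_toLp (Fin n))).comp
    ((volume_preserving_piFinSuccAbove (fun _ : Fin (n + 1) => ℝ) 0).comp
      (PiLp.volume_preserving_ofLp (Fin (n + 1))))
  convert h using 1
  · ext x
    · rfl
    · simp [headTail, Fin.tail]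
  · exact Measure.volume_eq_prod _ _

theorem norm_sq_eq_headTail (n : ℕ) (x : Euc (n + 1)) :
    ‖x‖ ^ 2 = (headTail n x).1 ^ 2 + ‖(headTail n x).2‖ ^ 2 := by
  simp [headTail, EuclideanSpace.norm_sq_eq, Fin.sum_univ_succ]

def solidOfRevolution (n : ℕ) (a b : ℝ) (r : ℝ → ℝ) : Set (ℝ × Euc n) :=
  {p | p.1 ∈ Ioo a b ∧ ‖p.2‖ < r p.1}

theorem measurableSet_solidOfRevolution (n : ℕ) (a b : ℝ) {r : ℝ → ℝ} (hr : Measurable r) :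
    MeasurableSet (solidOfRevolution n a b r) :=
  (measurable_fst measurableSet_Ioo).inter (measurableSet_lt (by fun_prop) (hr.comp measurable_fst))

theorem volume_solidOfRevolution (n : ℕ) {a b : ℝ} (hab : a ≤ b) {r : ℝ → ℝ}
    (hr : Continuous r) (hpos : ∀ t ∈ Ioo a b, 0 < r t) :
    volume (solidOfRevolution n a b r) =
      ENNReal.ofReal (∫ t in a..b, r t ^ n) * volume (ball (0 : Euc n) 1) := by
  have hslice : ∀ t, volume (Prod.mk t ⁻¹' solidOfRevolution n a b r) =
      (Ioo a b).indicator (fun t => ENNReal.ofReal (r t ^ n) * volume (ball (0 : Euc n) 1)) t := by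
    intro t
    by_cases ht : t ∈ Ioo a b
    · have hball : Prod.mk t ⁻¹' solidOfRevolution n a b r = ball 0 (r t) := by
        ext y
        exact ⟨fun h => mem_ball_zero_iff.2 h.2, fun h => ⟨ht, mem_ball_zero_iff.1 h⟩⟩
      rw [hball, Measure.addHaar_ball_of_pos _ _ (hpos t ht), finrank_euclideanSpace_fin,
        indicator_of_mem ht]
    · have hempty : Prod.mk t ⁻¹' solidOfRevolution n a b r = ∅ := by
        ext y
        exact iff_of_false (fun h => ht h.1) (notMem_empty y)
      rw [hempty, measure_empty, indicator_of_notMem ht]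
  rw [Measure.volume_eq_prod,
    Measure.prod_apply (measurableSet_solidOfRevolution n a b hr.measurable)]
  simp_rw [hslice]
  rw [lintegral_indicator measurableSet_Ioo, lintegral_mul_const _ (by fun_prop),
    intervalIntegral.integral_of_le hab, integral_Ioc_eq_integral_Ioo,
    ofReal_integral_eq_lintegral_ofReal]
  · exact (hr.pow n).integrableOn_Icc.mono_set Ioo_subset_Icc_self
  · filter_upwards [ae_restrict_mem measurableSet_Ioo] with t ht
    exact pow_nonneg (hpos t ht).le n

/-- The radius at height `t` of the double cone over the disc of radius `s` at height `c`, with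
apices at heights `0` and `1`. -/
def doubleConeRadius (c s t : ℝ) : ℝ :=
  s * min (t / c) ((1 - t) / (1 - c))

theorem integral_doubleConeRadius_pow {c : ℝ} (hc0 : 0 < c) (hc1 : c < 1) (s : ℝ) (n : ℕ) :
    ∫ t in (0 : ℝ)..1, doubleConeRadius c s t ^ n = s ^ n / (n + 1) := by
  have hcone : ∀ h : ℝ, h ≠ 0 → ∫ t in (0 : ℝ)..h, (t / h) ^ n = h / (n + 1) := by
    intro h hh
    rw [intervalIntegral.integral_comp_div (· ^ n) hh, integral_pow, zero_div, div_self hh]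
    simp [div_eq_mul_inv]
  have hcont : Continuous fun t : ℝ => min (t / c) ((1 - t) / (1 - c)) ^ n := by fun_prop
  have hleft : ∫ t in (0 : ℝ)..c, min (t / c) ((1 - t) / (1 - c)) ^ n = c / (n + 1) := by
    rw [← hcone c hc0.ne']
    refine intervalIntegral.integral_congr fun t ht => ?_
    rw [uIcc_of_le hc0.le] at ht
    rw [min_eq_left (by rw [div_le_div_iff₀ hc0 (by linarith)]; nlinarith [ht.2])]
  have hright : ∫ t in c..1, min (t / c) ((1 - t) / (1 - c)) ^ n = (1 - c) / (n + 1) := by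
    calc ∫ t in c..1, min (t / c) ((1 - t) / (1 - c)) ^ n
        = ∫ t in c..1, ((1 - t) / (1 - c)) ^ n := by
          refine intervalIntegral.integral_congr fun t ht => ?_
          rw [uIcc_of_le hc1.le] at ht
          rw [min_eq_right (by rw [div_le_div_iff₀ (by linarith) hc0]; nlinarith [ht.1])]
      _ = ∫ u in (0 : ℝ)..1 - c, (u / (1 - c)) ^ n := by
          rw [intervalIntegral.integral_comp_sub_left (fun u => (u / (1 - c)) ^ n), sub_self]
      _ = (1 - c) / (n + 1) := hcone _ (by linarith)
  simp only [doubleConeRadius, mul_pow, intervalIntegral.integral_const_mul]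
  rw [← intervalIntegral.integral_add_adjacent_intervals (hcont.intervalIntegrable 0 c)
    (hcont.intervalIntegrable c 1), hleft, hright]
  ring

theorem volume_doubleCone (n : ℕ) {c s : ℝ} (hc0 : 0 < c) (hc1 : c < 1) (hs : 0 < s) :
    volume (solidOfRevolution n 0 1 (doubleConeRadius c s)) =
      ENNReal.ofReal (s ^ n / (n + 1)) * volume (ball (0 : Euc n) 1) := by
  rw [volume_solidOfRevolution n zero_le_one (by unfold doubleConeRadius; fun_prop),
    integral_doubleConeRadius_pow hc0 hc1]
  intro t ht
  exact mul_pos hs (lt_min (div_pos ht.1 hc0) (div_pos (by linarith [ht.2]) (by linarith)))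

theorem sq_add_sq_lt_one_and_mul_lt_sq_of_lt_doubleConeRadius {c s t ρ : ℝ} (hc : 0 < c)
    (hs : 0 < s) (hcs : s ^ 2 + c ^ 2 = 1) (ht : 0 < t) (hρ0 : 0 ≤ ρ)
    (hρ : ρ < doubleConeRadius c s t) :
    t ^ 2 + ρ ^ 2 < 1 ∧ c ^ 2 * (t ^ 2 + ρ ^ 2) < t ^ 2 := by
  have hc1 : c < 1 := by nlinarith
  have hlower : ρ * c < s * t := by
    have := hρ.trans_le (mul_le_mul_of_nonneg_left (min_le_left _ _) hs.le)
    rwa [mul_div_assoc', lt_div_iff₀ hc] at this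
  have hupper : ρ * (1 - c) < s * (1 - t) := by
    have := hρ.trans_le (mul_le_mul_of_nonneg_left (min_le_right _ _) hs.le)
    rwa [mul_div_assoc', lt_div_iff₀ (by linarith)] at this
  have hcone : c ^ 2 * (t ^ 2 + ρ ^ 2) < t ^ 2 := by nlinarith [mul_nonneg hρ0 hc.le]
  refine ⟨?_, hcone⟩
  rcases le_or_gt t c with htc | htc
  · nlinarith
  · nlinarith [mul_nonneg hρ0 (sub_nonneg.2 hc1.le)]

theorem headTail_preimage_doubleCone_subset (n : ℕ) {φ : ℝ} (hφ0 : 0 < φ) (hφ1 : φ < π / 2) :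
    headTail n ⁻¹' solidOfRevolution n 0 1 (doubleConeRadius (cos φ) (sin φ)) ⊆
      {x | ‖x‖ ∈ Ioo 0 1 ∧ angle x (EuclideanSpace.single 0 1) ≤ φ} := by
  rintro x ⟨ht, hρ⟩
  have hx : x ≠ 0 := by
    rintro rfl
    simp [headTail] at ht
  obtain ⟨hball, hcone⟩ := sq_add_sq_lt_one_and_mul_lt_sq_of_lt_doubleConeRadius
    (cos_pos_of_mem_Ioo ⟨by linarith, hφ1⟩) (sin_pos_of_pos_of_lt_pi hφ0 (by linarith))
    (sin_sq_add_cos_sq φ) ht.1 (norm_nonneg _) hρ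
  rw [← norm_sq_eq_headTail] at hball hcone
  refine ⟨⟨norm_pos_iff.2 hx, lt_of_pow_lt_pow_left₀ 2 zero_le_one (by rwa [one_pow])⟩, ?_⟩
  refine angle_le_of_cos_mul_le_inner hφ0.le (by linarith) hx (by simp) ?_
  have hcos : cos φ * ‖x‖ < x 0 := lt_of_pow_lt_pow_left₀ 2 ht.1.le (by rwa [mul_pow])
  simpa [EuclideanSpace.inner_single_right] using hcos.le

theorem omega_gt_general (n : ℕ) (φ : ℝ) (hφ0 : 0 < φ) (hφ1 : φ < π / 2) :
    Real.sin φ ^ n / Real.sqrt (2 * π * (n + 1)) < Omega n φ := by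
  have hc : 0 < cos φ := cos_pos_of_mem_Ioo ⟨by linarith, hφ1⟩
  have hc1 : cos φ < 1 := by
    simpa using cos_lt_cos_of_nonneg_of_le_pi le_rfl (by linarith) hφ0
  have hs : 0 < sin φ := sin_pos_of_pos_of_lt_pi hφ0 (by linarith)
  set S := {x : Euc (n + 1) | ‖x‖ ∈ Ioo 0 1 ∧ angle x (EuclideanSpace.single 0 1) ≤ φ}
  set D := solidOfRevolution n 0 1 (doubleConeRadius (cos φ) (sin φ))
  have hDS : volume D ≤ volume S := by
    rw [← (measurePreserving_headTail n).measure_preimage (measurableSet_solidOfRevolution n 0 1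
      (by unfold doubleConeRadius; fun_prop)).nullMeasurableSet]
    exact measure_mono (headTail_preimage_doubleCone_subset n hφ0 hφ1)
  have hS : volume S ≠ ⊤ :=
    ((measure_mono fun x hx => mem_ball_zero_iff.2 hx.1.2).trans_lt measure_ball_lt_top).ne
  rw [Omega, sphereHaar_toReal_apply n (measurableSet_setOf_angle_le _ _),
    Ioo_smul_coe_image_setOf_angle_le]
  calc sin φ ^ n / √(2 * π * (n + 1)) = sin φ ^ n * (1 / √(2 * π * (n + 1))) := by ring
    _ < sin φ ^ n * ((volume (ball (0 : Euc n) 1)).toReal /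
          ((n + 1) * (volume (ball (0 : Euc (n + 1)) 1)).toReal)) :=
      mul_lt_mul_of_pos_left (one_div_sqrt_lt_volume_ball_div n) (pow_pos hs n)
    _ = (volume D).toReal / (volume (ball (0 : Euc (n + 1)) 1)).toReal := by
      rw [volume_doubleCone n hc hc1 hs, ENNReal.toReal_mul, ENNReal.toReal_ofReal (by positivity),
        mul_comm ((n : ℝ) + 1), ← div_div]
      ring
    _ ≤ (volume S).toReal / (volume (ball (0 : Euc (n + 1)) 1)).toReal :=
      div_le_div_of_nonneg_right (ENNReal.toReal_mono hS hDS) ENNReal.toReal_nonneg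

/-- **Böröczky–Wintsche, lower cap bound.** `Ω_n(φ) > sinⁿ φ / √(2π(n+1))`. -/
theorem omega_gt (n : ℕ) (hn : 1 ≤ n) (φ : ℝ) (hφ0 : 0 < φ) (hφ1 : φ < π / 2) :
    Real.sin φ ^ n / Real.sqrt (2 * π * (n + 1)) < Omega n φ :=
  omega_gt_general n φ hφ0 hφ1
end
end

section
/- For every integer n ≥ 1 and every 0 < φ < π/2 with φ ≤ arccos(1/√(n+1)), the normalized measure of a spherical cap of angular radius φ on the sphere S^n satisfies Ω_n(φ) < sin^n(φ) / (√(2πn)·cos φ). -/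
open Set Metric MeasureTheory ProbabilityTheory InnerProductGeometry Real


noncomputable section

/-!
Radial projection identifies the cap with the cone `Ioo 0 1 • cap`, so `Ω_n(φ)` is the volume of
that cone divided by the volume of the unit ball `Bⁿ⁺¹`. The slice of the cone at height `t` lies in
an `n`-ball of radius `min (t tan φ) √(1 - t²)`. Using `t tan φ` for `t ≤ cos φ` and
`√(1 - t²)ⁿ ≤ (t / cos φ) √(1 - t²)ⁿ` for `t ≥ cos φ` gives an elementary integral, so the cone has
volume at most `(sinⁿφ cos φ / (n+1) + sinⁿ⁺²φ / ((n+2) cos φ)) |Bⁿ|`. Log-convexity of `Γ` bounds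
`|Bⁿ| / |Bⁿ⁺¹|` by `√((n+2)/(2π))`, and the claim follows from
`cos²φ/(n+1) + sin²φ/(n+2) ≤ 1/(n+1)` and `√(n(n+2)) < n+1`.
-/

open scoped ENNReal Pointwise

theorem angle_single_zero_le_iff {n : ℕ} {v : Euc (n + 1)} (hv : ‖v‖ = 1) {φ : ℝ}
    (hφ0 : 0 ≤ φ) (hφπ : φ ≤ π) :
    angle v (EuclideanSpace.single 0 1) ≤ φ ↔ cos φ ≤ v 0 := by
  have hcos : cos (angle v (EuclideanSpace.single 0 1 : Euc (n + 1))) = v 0 := by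
    rw [cos_angle, hv, EuclideanSpace.inner_single_right]
    simp
  rw [← hcos]
  exact (strictAntiOn_cos.le_iff_ge ⟨hφ0, hφπ⟩ ⟨angle_nonneg v _, angle_le_pi v _⟩).symm

theorem sphereHaar_apply {n : ℕ} {A : Set (sphere (0 : Euc (n + 1)) 1)} (hA : MeasurableSet A) :
    sphereHaar n A =
      volume (Ioo (0 : ℝ) 1 • (Subtype.val '' A)) / volume (ball (0 : Euc (n + 1)) 1) := by
  have hdim : (Module.finrank ℝ (Euc (n + 1)) : ℝ≥0∞) ≠ 0 := by simp
  rw [sphereHaar, Measure.smul_apply, smul_eq_mul, Measure.toSphere_apply' _ hA,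
    Measure.toSphere_apply_univ, ENNReal.div_eq_inv_mul,
    ENNReal.mul_inv (.inl hdim) (.inl (ENNReal.natCast_ne_top _)), mul_mul_mul_comm,
    ENNReal.inv_mul_cancel hdim (ENNReal.natCast_ne_top _), one_mul]

theorem Ioo_smul_sphere_inter_subset {n : ℕ} {c s : ℝ} (hc : 0 < c) (hcs : c ^ 2 + s ^ 2 = 1) :
    Ioo (0 : ℝ) 1 • (sphere (0 : Euc (n + 1)) 1 ∩ {x | c ≤ x 0}) ⊆
      {x | x 0 ∈ Icc 0 1 ∧ ‖x‖ ^ 2 ≤ x 0 ^ 2 + (min (x 0 * (s / c)) √(1 - x 0 ^ 2)) ^ 2} := by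
  rintro _ ⟨a, ⟨ha0, ha1⟩, v, ⟨hv, hcv : c ≤ v 0⟩, rfl⟩
  rw [mem_sphere_zero_iff_norm] at hv
  have hv0 : v 0 ≤ 1 := by simpa [hv] using (le_abs_self _).trans (PiLp.norm_apply_le v 0)
  have hcv0 : c ^ 2 ≤ v 0 ^ 2 := pow_le_pow_left₀ hc.le hcv 2
  have hnorm : ‖a • v‖ = a := by rw [norm_smul, hv, mul_one, norm_of_nonneg ha0.le]
  simp only [mem_ofPred_eq, PiLp.smul_apply, smul_eq_mul, hnorm]
  have hx0 : 0 ≤ a * v 0 := mul_nonneg ha0.le (hc.le.trans hcv)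
  have hx1 : a * v 0 ≤ 1 := mul_le_one₀ ha1.le (hc.le.trans hcv) hv0
  refine ⟨⟨hx0, hx1⟩, ?_⟩
  rcases min_choice (a * v 0 * (s / c)) √(1 - (a * v 0) ^ 2) with h | h <;> rw [h]
  · have hsum : (a * v 0) ^ 2 + (a * v 0 * (s / c)) ^ 2 = a ^ 2 * (v 0 ^ 2 / c ^ 2) := by
      field_simp
      linear_combination v 0 ^ 2 * hcs
    rw [hsum]
    exact le_mul_of_one_le_right (sq_nonneg a) ((one_le_div (by positivity)).2 hcv0)
  · rw [sq_sqrt (by nlinarith)]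
    nlinarith

theorem volume_setOf_norm_sq_le {n : ℕ} {I : Set ℝ} (hI : MeasurableSet I) {g : ℝ → ℝ}
    (hg : Measurable g) (hg0 : ∀ t ∈ I, 0 ≤ g t) :
    volume {x : Euc (n + 1) | x 0 ∈ I ∧ ‖x‖ ^ 2 ≤ x 0 ^ 2 + g (x 0) ^ 2} =
      (∫⁻ t in I, ENNReal.ofReal (g t ^ n)) * volume (ball (0 : Euc n) 1) := by
  let e : Euc (n + 1) → ℝ × Euc n := fun x => (x 0, WithLp.toLp 2 fun j => x j.succ)
  have he : MeasurePreserving e :=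
    ((MeasurePreserving.id volume).prod (PiLp.volume_preserving_toLp (Fin n))).comp
      ((volume_preserving_piFinSuccAbove (fun _ => ℝ) 0).comp (PiLp.volume_preserving_ofLp _))
  have hnorm (x : Euc (n + 1)) : ‖x‖ ^ 2 = x 0 ^ 2 + ‖(e x).2‖ ^ 2 := by
    simp [e, EuclideanSpace.real_norm_sq_eq, Fin.sum_univ_succ]
  let T : Set (ℝ × Euc n) := {p | p.1 ∈ I ∧ ‖p.2‖ ≤ g p.1}
  have hT : MeasurableSet T :=
    (measurable_fst hI).inter (measurableSet_le measurable_snd.norm (hg.comp measurable_fst))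
  have hpre : {x : Euc (n + 1) | x 0 ∈ I ∧ ‖x‖ ^ 2 ≤ x 0 ^ 2 + g (x 0) ^ 2} = e ⁻¹' T := by
    ext x
    simp only [mem_ofPred_eq, mem_preimage, T, hnorm x, add_le_add_iff_left]
    exact and_congr_right fun ht =>
      pow_le_pow_iff_left₀ (norm_nonneg _) (hg0 _ ht) two_ne_zero
  have hsection (t : ℝ) : volume (Prod.mk t ⁻¹' T) =
      I.indicator (fun t => ENNReal.ofReal (g t ^ n) * volume (ball (0 : Euc n) 1)) t := by
    by_cases ht : t ∈ I
    · have : Prod.mk t ⁻¹' T = closedBall 0 (g t) := by ext y; simp [T, ht]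
      rw [this, indicator_of_mem ht, Measure.addHaar_closedBall _ _ (hg0 t ht),
        finrank_euclideanSpace_fin]
    · have : Prod.mk t ⁻¹' T = ∅ := by ext y; simp [T, ht]
      rw [this, indicator_of_notMem ht, measure_empty]
  rw [hpre, he.measure_preimage hT.nullMeasurableSet, Measure.volume_eq_prod,
    Measure.prod_apply hT, funext hsection, lintegral_indicator hI,
    lintegral_mul_const _ (hg.pow_const n).ennreal_ofReal]

theorem integral_mul_sqrt_one_sub_sq_pow (n : ℕ) {c : ℝ} (hc : -1 ≤ c) (hc1 : c ≤ 1) :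
    ∫ t in c..1, t * √(1 - t ^ 2) ^ n = √(1 - c ^ 2) ^ (n + 2) / (n + 2) := by
  let F : ℝ → ℝ := fun t => -√(1 - t ^ 2) ^ (n + 2) / (n + 2)
  have hderiv : ∀ t ∈ Ioo c 1, HasDerivAt F (t * √(1 - t ^ 2) ^ n) t := by
    intro t ⟨hct, ht1⟩
    have hpos : 0 < 1 - t ^ 2 := by nlinarith
    have hsqrt : HasDerivAt (fun t : ℝ => √(1 - t ^ 2)) (-(2 * t) / (2 * √(1 - t ^ 2))) t := by
      simpa using ((hasDerivAt_pow 2 t).const_sub 1).sqrt hpos.ne'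
    refine (((hsqrt.pow (n + 2)).neg).div_const ((n : ℝ) + 2)).congr_deriv ?_
    have : 0 < √(1 - t ^ 2) := sqrt_pos.2 hpos
    field_simp
    push_cast
    ring
  rw [intervalIntegral.integral_eq_sub_of_hasDerivAt_of_le hc1 (by fun_prop) hderiv
    (by apply Continuous.intervalIntegrable; fun_prop)]
  simp [F]
  ring

theorem integral_min_pow_le (n : ℕ) {c s : ℝ} (hc : 0 < c) (hs : 0 ≤ s) (hcs : c ^ 2 + s ^ 2 = 1) :
    ∫ t in (0 : ℝ)..1, (min (t * (s / c)) √(1 - t ^ 2)) ^ n ≤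
      s ^ n * c / (n + 1) + s ^ (n + 2) / ((n + 2) * c) := by
  have hc1 : c ≤ 1 := by nlinarith
  have hint (a b : ℝ) : IntervalIntegrable (fun t => (min (t * (s / c)) √(1 - t ^ 2)) ^ n)
      volume a b := by
    apply Continuous.intervalIntegrable; fun_prop
  have hcone : ∫ t in (0 : ℝ)..c, (min (t * (s / c)) √(1 - t ^ 2)) ^ n ≤ s ^ n * c / (n + 1) := by
    calc ∫ t in (0 : ℝ)..c, (min (t * (s / c)) √(1 - t ^ 2)) ^ n
        ≤ ∫ t in (0 : ℝ)..c, (s / c) ^ n * t ^ n := by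
          refine intervalIntegral.integral_mono_on hc.le (hint _ _)
            (by apply Continuous.intervalIntegrable; fun_prop) fun t ⟨ht0, _⟩ => ?_
          rw [← mul_pow, mul_comm]
          exact pow_le_pow_left₀ (le_min (by positivity) (sqrt_nonneg _)) (min_le_left _ _) n
      _ = s ^ n * c / (n + 1) := by
          rw [intervalIntegral.integral_const_mul, integral_pow, zero_pow n.succ_ne_zero, sub_zero,
            div_pow]
          field_simp
          ring
  have hsphere : ∫ t in c..1, (min (t * (s / c)) √(1 - t ^ 2)) ^ n ≤
      s ^ (n + 2) / ((n + 2) * c) := by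
    calc ∫ t in c..1, (min (t * (s / c)) √(1 - t ^ 2)) ^ n
        ≤ ∫ t in c..1, c⁻¹ * (t * √(1 - t ^ 2) ^ n) := by
          refine intervalIntegral.integral_mono_on hc1 (hint _ _)
            (by apply Continuous.intervalIntegrable; fun_prop) fun t ⟨hct, _⟩ => ?_
          calc (min (t * (s / c)) √(1 - t ^ 2)) ^ n ≤ √(1 - t ^ 2) ^ n :=
                pow_le_pow_left₀ (le_min (mul_nonneg (hc.le.trans hct) (by positivity))
                  (sqrt_nonneg _)) (min_le_right _ _) n
            _ ≤ t / c * √(1 - t ^ 2) ^ n :=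
                le_mul_of_one_le_left (by positivity) ((one_le_div hc).2 hct)
            _ = c⁻¹ * (t * √(1 - t ^ 2) ^ n) := by ring
      _ = s ^ (n + 2) / ((n + 2) * c) := by
          rw [intervalIntegral.integral_const_mul,
            integral_mul_sqrt_one_sub_sq_pow n (by linarith) hc1,
            show 1 - c ^ 2 = s ^ 2 by linarith, sqrt_sq hs]
          field_simp
  rw [← intervalIntegral.integral_add_adjacent_intervals (hint 0 c) (hint c 1)]
  exact add_le_add hcone hsphere

theorem volume_Ioo_smul_sphere_inter_le (n : ℕ) {c s : ℝ} (hc : 0 < c) (hs : 0 ≤ s)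
    (hcs : c ^ 2 + s ^ 2 = 1) :
    volume (Ioo (0 : ℝ) 1 • (sphere (0 : Euc (n + 1)) 1 ∩ {x | c ≤ x 0})) ≤
      ENNReal.ofReal (s ^ n * c / (n + 1) + s ^ (n + 2) / ((n + 2) * c)) *
        volume (ball (0 : Euc n) 1) := by
  let g : ℝ → ℝ := fun t => min (t * (s / c)) √(1 - t ^ 2)
  have hg : Continuous g := by fun_prop
  have hg0 : ∀ t ∈ Icc (0 : ℝ) 1, 0 ≤ g t := fun t ht =>
    le_min (mul_nonneg ht.1 (by positivity)) (sqrt_nonneg _)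
  have hlintegral : ∫⁻ t in Icc 0 1, ENNReal.ofReal (g t ^ n) =
      ENNReal.ofReal (∫ t in (0 : ℝ)..1, g t ^ n) := by
    have hint : IntegrableOn (fun t => g t ^ n) (Icc 0 1) := (hg.pow n).integrableOn_Icc
    rw [intervalIntegral.integral_of_le zero_le_one, ← integral_Icc_eq_integral_Ioc,
      ofReal_integral_eq_lintegral_ofReal hint]
    filter_upwards [ae_restrict_mem measurableSet_Icc] with t ht using pow_nonneg (hg0 t ht) n
  calc volume (Ioo (0 : ℝ) 1 • (sphere (0 : Euc (n + 1)) 1 ∩ {x | c ≤ x 0}))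
      ≤ volume {x : Euc (n + 1) | x 0 ∈ Icc 0 1 ∧ ‖x‖ ^ 2 ≤ x 0 ^ 2 + g (x 0) ^ 2} :=
        measure_mono (Ioo_smul_sphere_inter_subset hc hcs)
    _ = (∫⁻ t in Icc 0 1, ENNReal.ofReal (g t ^ n)) * volume (ball (0 : Euc n) 1) :=
        volume_setOf_norm_sq_le measurableSet_Icc hg.measurable hg0
    _ ≤ _ := by
        rw [hlintegral]
        gcongr
        exact integral_min_pow_le n hc hs hcs

theorem Gamma_add_half_le {x : ℝ} (hx : 0 < x) : Gamma (x + 1 / 2) ≤ √x * Gamma x := by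
  have h := Gamma_mul_add_mul_le_rpow_Gamma_mul_rpow_Gamma hx (by linarith : 0 < x + 1)
    (by norm_num : (0 : ℝ) < 1 / 2) (by norm_num : (0 : ℝ) < 1 / 2) (by norm_num)
  have hΓ := (Gamma_pos_of_pos hx).le
  have hrhs : Gamma x ^ (1 / 2 : ℝ) * (x * Gamma x) ^ (1 / 2 : ℝ) = √x * Gamma x := by
    rw [mul_rpow hx.le hΓ, mul_left_comm, ← rpow_add' hΓ (by norm_num), sqrt_eq_rpow]
    norm_num
  rw [Gamma_add_one hx.ne', hrhs] at h
  convert h using 2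
  ring

theorem volume_unitBall_toReal (m : ℕ) [NeZero m] :
    (volume (ball (0 : Euc m) 1)).toReal = √π ^ m / Gamma (m / 2 + 1) := by
  rw [EuclideanSpace.volume_ball, Fintype.card_fin, ENNReal.ofReal_one, one_pow, one_mul,
    ENNReal.toReal_ofReal (by positivity)]

theorem volume_ball_div_volume_ball_succ_le (n : ℕ) [NeZero n] :
    (volume (ball (0 : Euc n) 1)).toReal / (volume (ball (0 : Euc (n + 1)) 1)).toReal ≤
      √((n + 2) / (2 * π)) := by
  have hsqrt : √((n + 2) / (2 * π)) = √((n : ℝ) / 2 + 1) / √π := by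
    rw [← sqrt_div' _ pi_pos.le]
    congr 1
    field_simp
  rw [volume_unitBall_toReal, volume_unitBall_toReal, hsqrt, div_div_div_eq, pow_succ,
    div_le_div_iff₀ (by positivity) (by positivity)]
  have hΓ := Gamma_add_half_le (x := (n : ℝ) / 2 + 1) (by positivity)
  rw [show (n : ℝ) / 2 + 1 + 1 / 2 = ((n + 1 : ℕ) : ℝ) / 2 + 1 by push_cast; ring] at hΓ
  calc √π ^ n * Gamma (((n + 1 : ℕ) : ℝ) / 2 + 1) * √π
      ≤ √π ^ n * (√((n : ℝ) / 2 + 1) * Gamma (n / 2 + 1)) * √π := by gcongr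
    _ = √((n : ℝ) / 2 + 1) * (Gamma (n / 2 + 1) * (√π ^ n * √π)) := by ring

theorem cap_volume_bound_mul_sqrt_lt {n : ℕ} (hn : 1 ≤ n) {c s : ℝ} (hc : 0 < c) (hs : 0 < s)
    (hcs : c ^ 2 + s ^ 2 = 1) :
    (s ^ n * c / (n + 1) + s ^ (n + 2) / ((n + 2) * c)) * √((n + 2) / (2 * π)) <
      s ^ n / (√(2 * π * n) * c) := by
  have hn' : (1 : ℝ) ≤ n := by exact_mod_cast hn
  have hsqrt : √((n + 2) / (2 * π)) * √(2 * π * n) = √(n * (n + 2)) := by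
    rw [← sqrt_mul (by positivity)]
    congr 1
    field_simp
  have hsqrt_lt : √(n * (n + 2)) < n + 1 := by
    rw [sqrt_lt' (by positivity)]
    nlinarith
  have hbound : (s ^ n * c / (n + 1) + s ^ (n + 2) / ((n + 2) * c)) * c ≤ s ^ n / (n + 1) :=
    calc (s ^ n * c / (n + 1) + s ^ (n + 2) / ((n + 2) * c)) * c
        = s ^ n * (c ^ 2 / (n + 1) + s ^ 2 / (n + 2)) := by field_simp; ring
      _ ≤ s ^ n * (c ^ 2 / (n + 1) + s ^ 2 / (n + 1)) := by gcongr; linarith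
      _ = s ^ n / (n + 1) := by rw [← add_div, hcs, mul_one_div]
  rw [lt_div_iff₀ (by positivity)]
  calc (s ^ n * c / (n + 1) + s ^ (n + 2) / ((n + 2) * c)) * √((n + 2) / (2 * π)) *
        (√(2 * π * n) * c)
      = (s ^ n * c / (n + 1) + s ^ (n + 2) / ((n + 2) * c)) * c * √(n * (n + 2)) := by
        rw [← hsqrt]; ring
    _ ≤ s ^ n / (n + 1) * √(n * (n + 2)) := by gcongr
    _ < s ^ n / (n + 1) * (n + 1) := by gcongr
    _ = s ^ n := by field_simp

theorem omega_lt_general (n : ℕ) (hn : 1 ≤ n) (φ : ℝ) (hφ0 : 0 < φ) (hφ1 : φ < π / 2) :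
    Omega n φ < Real.sin φ ^ n / (Real.sqrt (2 * π * n) * Real.cos φ) := by
  have : NeZero n := ⟨by omega⟩
  have hc : 0 < cos φ := cos_pos_of_mem_Ioo ⟨by linarith, hφ1⟩
  have hs : 0 < sin φ := sin_pos_of_pos_of_lt_pi hφ0 (by linarith)
  have hcap : {v : sphere (0 : Euc (n + 1)) 1 |
      angle (v : Euc (n + 1)) (EuclideanSpace.single 0 1) ≤ φ} =
        Subtype.val ⁻¹' {x | cos φ ≤ x 0} := by
    ext v
    exact angle_single_zero_le_iff (mem_sphere_zero_iff_norm.1 v.2) hφ0.le (by linarith)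
  have hΩ : Omega n φ =
      (volume (Ioo (0 : ℝ) 1 • (sphere (0 : Euc (n + 1)) 1 ∩ {x | cos φ ≤ x 0}))).toReal /
        (volume (ball (0 : Euc (n + 1)) 1)).toReal := by
    rw [Omega, hcap, sphereHaar_apply ((measurableSet_le measurable_const (by fun_prop)).preimage
      measurable_subtype_coe), Subtype.image_preimage_coe, ENNReal.toReal_div]
  set I := sin φ ^ n * cos φ / (n + 1) + sin φ ^ (n + 2) / ((n + 2) * cos φ)
  have hcone := ENNReal.toReal_mono (by finiteness)
    (volume_Ioo_smul_sphere_inter_le n hc hs.le (cos_sq_add_sin_sq φ))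
  rw [ENNReal.toReal_mul, ENNReal.toReal_ofReal (by positivity)] at hcone
  calc Omega n φ
      ≤ I * (volume (ball (0 : Euc n) 1)).toReal / (volume (ball (0 : Euc (n + 1)) 1)).toReal := by
        rw [hΩ]; gcongr
    _ ≤ I * √((n + 2) / (2 * π)) := by
        rw [mul_div_assoc]; gcongr; exact volume_ball_div_volume_ball_succ_le n
    _ < _ := cap_volume_bound_mul_sqrt_lt hn hc hs (cos_sq_add_sin_sq φ)

/-- **Böröczky–Wintsche, upper cap bound.** If `φ ≤ arccos (1/√(n+1))` then
`Ω_n(φ) < sinⁿ φ / (√(2πn) · cos φ)`. -/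
theorem omega_lt (n : ℕ) (hn : 1 ≤ n) (φ : ℝ) (hφ0 : 0 < φ) (hφ1 : φ < π / 2)
    (hφ2 : φ ≤ Real.arccos (1 / Real.sqrt (n + 1))) :
    Omega n φ < Real.sin φ ^ n / (Real.sqrt (2 * π * n) * Real.cos φ) :=
  omega_lt_general n hn φ hφ0 hφ1
end
end

section
/- Let K be a convex body in ℝ^n with (1/D)·B^n ⊆ K ⊆ B^n for some D > 1, and let α = arcsin(1/D). Suppose A ⊆ S^{n-1} is a finite set of directions such that the open spherical caps of angular radius α centered at the points of A cover S^{n-1} (equivalently, A meets every open spherical cap of radius α). Then A illuminates K, i.e., every boundary point of K is illuminated by some direction in A; hence i(K) ≤ |A|. -/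
/-!
A boundary point `b` of `K` lies outside the open ball of radius `1/D` but inside the unit
ball. Pick `a ∈ A` at angle `θ < α` from `-b`, and move from `b` in direction `a` to the foot of
the perpendicular from the origin onto that ray, at distance `‖b‖ cos θ > 0`. The foot is at
distance `‖b‖ sin θ < sin α = 1/D` from the origin, hence in the interior of `K`.
-/

open Set Metric MeasureTheory ProbabilityTheory InnerProductGeometry Real


noncomputable section

namespace InnerProductGeometry

variable {V : Type*} [NormedAddCommGroup V] [InnerProductSpace ℝ V]

theorem norm_mul_cos_angle_smul_sub_eq_mul_sin_angle {a : V} (ha : ‖a‖ = 1) (w : V) :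
    ‖(‖w‖ * cos (angle a w)) • a - w‖ = ‖w‖ * sin (angle a w) := by
  have hinner : inner ℝ a w = ‖w‖ * cos (angle a w) := by
    rw [← cos_angle_mul_norm_mul_norm, ha]; ring
  have hsq : ‖(‖w‖ * cos (angle a w)) • a - w‖ ^ 2 = (‖w‖ * sin (angle a w)) ^ 2 := by
    rw [norm_sub_sq_real, real_inner_smul_left, hinner, norm_smul, Real.norm_eq_abs, ha,
      mul_one, sq_abs]
    linear_combination (-‖w‖ ^ 2) * sin_sq_add_cos_sq (angle a w)
  exact (sq_eq_sq₀ (norm_nonneg _) (mul_nonneg (norm_nonneg w) (sin_angle_nonneg a w))).1 hsq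

end InnerProductGeometry

theorem illuminates_of_angle_neg_lt_arcsin {n : ℕ} {K : Set (Euc n)} {a b : Euc n} {r : ℝ}
    (hball : ball (0 : Euc n) r ⊆ interior K) (ha : ‖a‖ = 1) (hb0 : b ≠ 0) (hb1 : ‖b‖ ≤ 1)
    (hangle : angle a (-b) < arcsin r) : Illuminates K a b := by
  set θ := angle a (-b)
  have hθ : θ ∈ Ico (-(π / 2)) (π / 2) :=
    ⟨by linarith [angle_nonneg a (-b), pi_pos], hangle.trans_le (arcsin_le_pi_div_two r)⟩
  have hsin : sin θ < r := (lt_arcsin_iff_sin_lt' hθ).1 hangle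
  have hcos : 0 < cos θ := cos_pos_of_mem_Ioo ⟨by linarith [angle_nonneg a (-b), pi_pos], hθ.2⟩
  refine ⟨‖b‖ * cos θ, mul_pos (norm_pos_iff.2 hb0) hcos, hball (mem_ball_zero_iff.2 ?_)⟩
  have hfoot := norm_mul_cos_angle_smul_sub_eq_mul_sin_angle ha (-b)
  rw [norm_neg, sub_neg_eq_add, add_comm] at hfoot
  calc ‖b + (‖b‖ * cos θ) • a‖ = ‖b‖ * sin θ := hfoot
    _ ≤ sin θ := mul_le_of_le_one_left (sin_angle_nonneg a (-b)) hb1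
    _ < r := hsin

theorem illuminatedBy_of_forall_angle_lt_arcsin {n : ℕ} {K A : Set (Euc n)} {r : ℝ} (hr : 0 < r)
    (hball : ball (0 : Euc n) r ⊆ interior K) (hK : K ⊆ closedBall (0 : Euc n) 1)
    (hA : A ⊆ sphere (0 : Euc n) 1)
    (hcover : ∀ v ∈ sphere (0 : Euc n) 1, ∃ a ∈ A, angle a v < arcsin r) :
    IlluminatedBy K A := by
  intro b hb
  have hb1 : ‖b‖ ≤ 1 :=
    mem_closedBall_zero_iff.1 (closure_minimal hK isClosed_closedBall (frontier_subset_closure hb))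
  have hbr : r ≤ ‖b‖ := by
    by_contra! hlt
    exact hb.2 (hball (mem_ball_zero_iff.2 hlt))
  have hb0 : 0 < ‖b‖ := hr.trans_le hbr
  obtain ⟨a, haA, hangle⟩ := hcover (‖b‖⁻¹ • -b) (by simp [norm_smul, hb0.ne'])
  rw [angle_smul_right_of_pos _ _ (inv_pos.2 hb0)] at hangle
  exact ⟨a, haA, illuminates_of_angle_neg_lt_arcsin hball (mem_sphere_zero_iff_norm.1 (hA haA))
    (norm_pos_iff.1 hb0) hb1 hangle⟩

theorem illumNumber_le_card {n : ℕ} {K : Set (Euc n)} {A : Finset (Euc n)}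
    (hA : (A : Set (Euc n)) ⊆ sphere (0 : Euc n) 1) (hill : IlluminatedBy K A) :
    illumNumber K ≤ A.card :=
  Nat.sInf_le ⟨A, hA, hill, rfl⟩

theorem illuminatedBy_of_cap_cover_general {n : ℕ} (D : ℝ) (hD : 1 < D) (K : Set (Euc n))
    (hK1 : Metric.closedBall (0 : Euc n) (1 / D) ⊆ K)
    (hK2 : K ⊆ Metric.closedBall (0 : Euc n) 1)
    (A : Finset (Euc n)) (hA : (A : Set (Euc n)) ⊆ Metric.sphere (0 : Euc n) 1)
    (hcover : ∀ v ∈ Metric.sphere (0 : Euc n) 1, ∃ a ∈ A,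
      InnerProductGeometry.angle a v < Real.arcsin (1 / D)) :
    IlluminatedBy K (A : Set (Euc n)) ∧ illumNumber K ≤ A.card := by
  have hr : (0 : ℝ) < 1 / D := one_div_pos.2 (zero_lt_one.trans hD)
  have hball : ball (0 : Euc n) (1 / D) ⊆ interior K := by
    rw [← interior_closedBall _ hr.ne']
    exact interior_mono hK1
  have hill := illuminatedBy_of_forall_angle_lt_arcsin hr hball hK2 hA hcover
  exact ⟨hill, illumNumber_le_card hA hill⟩

/-- If `(1/D)·Bⁿ ⊆ K ⊆ Bⁿ`, `α = arcsin (1/D)`, and `A ⊆ S^{n-1}` is a finite set meeting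
every open spherical cap of radius `α` (equivalently, the open caps of radius `α` centered
at points of `A` cover the sphere), then `A` illuminates `K`; hence `i(K) ≤ |A|`. -/
theorem illuminatedBy_of_cap_cover {n : ℕ} (D : ℝ) (hD : 1 < D) (K : Set (Euc n))
    (hKcomp : IsCompact K) (hKconv : Convex ℝ K) (hKint : (interior K).Nonempty)
    (hK1 : Metric.closedBall (0 : Euc n) (1 / D) ⊆ K)
    (hK2 : K ⊆ Metric.closedBall (0 : Euc n) 1)
    (A : Finset (Euc n)) (hA : (A : Set (Euc n)) ⊆ Metric.sphere (0 : Euc n) 1)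
    (hcover : ∀ v ∈ Metric.sphere (0 : Euc n) 1, ∃ a ∈ A,
      InnerProductGeometry.angle a v < Real.arcsin (1 / D)) :
    IlluminatedBy K (A : Set (Euc n)) ∧ illumNumber K ≤ A.card :=
  illuminatedBy_of_cap_cover_general D hD K hK1 hK2 A hA hcover
end
end

section
/- There exist n + 1 points on the sphere S^{n-1} (for example, the vertices of a regular simplex inscribed in S^{n-1}) with the property that every open hemisphere of S^{n-1} contains at least one of these points; here an open hemisphere is a set of the form {v ∈ S^{n-1} : ⟨v, w⟩ > 0} for some w ∈ S^{n-1}. -/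
open Set Metric MeasureTheory ProbabilityTheory InnerProductGeometry Real
open scoped InnerProductSpace

noncomputable section

/-! The standard basis vectors `e₁, …, eₙ` together with the unit vector in the direction of
`-(e₁ + ⋯ + eₙ)` work: if `w ≠ 0` has no positive coordinate, then some coordinate is
negative, so the coordinate sum is negative and `w` makes a positive inner product with the
last point. -/

theorem exists_pos_or_sum_neg {ι : Type*} [Fintype ι] {x : ι → ℝ} (hx : x ≠ 0) :
    (∃ i, 0 < x i) ∨ ∑ i, x i < 0 := by
  by_contra! h
  obtain ⟨hnonpos, hsum⟩ := h
  have hzero := (Finset.sum_eq_zero_iff_of_nonpos fun i _ => hnonpos i).1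
    (le_antisymm (Finset.sum_nonpos fun i _ => hnonpos i) hsum)
  exact hx <| funext fun i => hzero i (Finset.mem_univ i)

namespace OrthonormalBasis

variable {ι E : Type*} [Fintype ι] [NormedAddCommGroup E] [InnerProductSpace ℝ E]

theorem exists_inner_pos_or_inner_sum_neg (b : OrthonormalBasis ι ℝ E) {w : E} (hw : w ≠ 0) :
    (∃ i, 0 < ⟪b i, w⟫_ℝ) ∨ ⟪∑ i, b i, w⟫_ℝ < 0 := by
  rw [sum_inner]
  refine exists_pos_or_sum_neg fun h => hw <| b.repr.injective ?_
  ext i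
  simpa [b.repr_apply_apply] using congrFun h i

theorem sum_ne_zero [Nonempty ι] (b : OrthonormalBasis ι ℝ E) : ∑ i, b i ≠ 0 := by
  classical
  obtain ⟨j⟩ := ‹Nonempty ι›
  intro h
  simpa [inner_sum, b.inner_eq_ite] using congrArg (⟪b j, ·⟫_ℝ) h

theorem exists_unit_vectors_inner_pos {n : ℕ} [NeZero n] (b : OrthonormalBasis (Fin n) ℝ E) :
    ∃ f : Fin (n + 1) → E, (∀ i, ‖f i‖ = 1) ∧ ∀ w ≠ 0, ∃ i, 0 < ⟪f i, w⟫_ℝ := by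
  set s := ∑ i, b i
  have hs : 0 < ‖s‖ := norm_pos_iff.2 b.sum_ne_zero
  refine ⟨Fin.snoc (α := fun _ => E) b (-(‖s‖⁻¹ • s)), ?_, fun w hw => ?_⟩
  · refine Fin.lastCases ?_ fun i => ?_
    · simpa using norm_smul_inv_norm (𝕜 := ℝ) b.sum_ne_zero
    · simp
  rcases b.exists_inner_pos_or_inner_sum_neg hw with ⟨i, hi⟩ | hsum
  · exact ⟨i.castSucc, by simpa using hi⟩
  · refine ⟨Fin.last n, ?_⟩
    rw [Fin.snoc_last, inner_neg_left, real_inner_smul_left, ← mul_neg]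
    exact mul_pos (inv_pos.2 hs) (neg_pos.2 hsum)

end OrthonormalBasis

/-- There exist `n + 1` points on `S^{n-1}` (e.g. the vertices of a regular simplex) such
that every open hemisphere `{v : ⟪v, w⟫ > 0}` contains at least one of them. -/
theorem exists_points_meeting_every_open_hemisphere (n : ℕ) (hn : 1 ≤ n) :
    ∃ f : Fin (n + 1) → Euc n,
      (∀ i, f i ∈ Metric.sphere (0 : Euc n) 1) ∧
      ∀ w ∈ Metric.sphere (0 : Euc n) 1, ∃ i, 0 < ⟪f i, w⟫_ℝ := by
  have : NeZero n := ⟨by omega⟩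
  obtain ⟨f, hf, hpos⟩ := (EuclideanSpace.basisFun (Fin n) ℝ).exists_unit_vectors_inner_pos
  exact ⟨f, fun i => mem_sphere_zero_iff_norm.2 (hf i),
    fun w hw => hpos w (ne_zero_of_mem_unit_sphere ⟨w, hw⟩)⟩
end
end
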